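/- arXiv:1101.1483 — 2 statements merged into one kernel-verified Lean document; each statement's English description precedes it below -/
import Mathlib

section
/- Define f : ℂ → ℂ by f(z) = 2^{-(m+1)} h(2^m z) when Im z ∈ (2^{-(m+1)}, 2^{-m}] for m ∈ ℤ, and f(x+iy) = 2x + iy/2 when y ≤ 0. Then f is well-defined and continuous on ℂ, and Im(f(z)) = (Im z)/2 for all z ∈ ℂ. -/
open Set Complex Filter

/-- The slice function `h_y`. -/
noncomputable def hy (y x : ℝ) : ℝ :=
  if |x| + |y - 3/4| < 1/4 then 1
  else if y ≤ |x| then 4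
  else if y ≤ 3/4 then 6 * |x| - 6 * y + 4
  else (3 * |x| + 5 * y - 4) / (2 * y - 1)

/-- The map `h(x + iy) = h_y(x)·x + iy`. -/
noncomputable def hmap (z : ℂ) : ℂ := ⟨hy z.im z.re * z.re, z.im⟩

/-- For `y > 0`, the unique integer `m` with `2^{-(m+1)} < y ≤ 2^{-m}`. -/
noncomputable def mval (y : ℝ) : ℤ := ⌊Real.logb 2 y⁻¹⌋

/-- The map `f`: equal to `2^{-(m+1)} h(2^m z)` when `Im z ∈ (2^{-(m+1)}, 2^{-m}]`,
and to `2x + iy/2` when `Im z ≤ 0`. -/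
noncomputable def f (z : ℂ) : ℂ :=
  if z.im ≤ 0 then ⟨2 * z.re, z.im / 2⟩
  else (2 : ℂ) ^ (-(mval z.im + 1)) * hmap ((2 : ℂ) ^ (mval z.im) * z)

/-!
On the strip `2^{-(m+1)} < Im z ≤ 2^{-m}` the map `f` is a rescaled copy of `h`, and `h` is
continuous. Consecutive strips glue continuously because `h_{1/2}(x) = h_1(2x)`. On the cone
`Im z ≤ |Re z|` one has `h_y = 4`, so there `f` is the linear map `x + iy ↦ 2x + iy/2`; this
covers the closed lower half-plane except the origin, where continuity follows from
`‖f z‖ ≤ 2‖z‖`, a consequence of `|h_y| ≤ 4`.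
-/

lemma mval_eq_iff {y : ℝ} (hy : 0 < y) {m : ℤ} :
    mval y = m ↔ y ∈ Ioc ((2:ℝ) ^ (-(m+1))) ((2:ℝ) ^ (-m)) := by
  have h2 : (1:ℝ) < 2 := one_lt_two
  rw [mval, Int.floor_eq_iff, Real.le_logb_iff_rpow_le h2 (inv_pos.2 hy),
    Real.logb_lt_iff_lt_rpow h2 (inv_pos.2 hy), ← Int.cast_one, ← Int.cast_add,
    Real.rpow_intCast, Real.rpow_intCast, le_inv_comm₀ (zpow_pos two_pos _) hy,
    inv_lt_comm₀ hy (zpow_pos two_pos _), ← zpow_neg, ← zpow_neg, and_comm, mem_Ioc]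

lemma hy_eq_four_of_le_abs {y x : ℝ} (h : y ≤ |x|) : hy y x = 4 := by
  have : ¬ |x| + |y - 3/4| < 1/4 := by
    have := neg_abs_le (y - 3/4)
    linarith
  rw [hy, if_neg this, if_pos h]

lemma abs_hy_le_four (y x : ℝ) : |hy y x| ≤ 4 := by
  have hx := abs_nonneg x
  unfold hy
  split_ifs
  · norm_num
  · norm_num
  · rw [abs_le]; constructor <;> linarith
  · have hden : (0:ℝ) < 2 * y - 1 := by linarith
    rw [abs_le, le_div_iff₀ hden, div_le_iff₀ hden]
    constructor <;> linarith

lemma hy_half (x : ℝ) : hy (1/2) x = hy 1 (2 * x) := by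
  have hx := abs_nonneg x
  rw [hy, hy, abs_mul, abs_two, show |(1:ℝ)/2 - 3/4| = 1/4 by norm_num [abs_of_nonpos],
    show |(1:ℝ) - 3/4| = 1/4 by norm_num [abs_of_nonneg], if_neg (not_lt.2 (by linarith)),
    if_neg (not_lt.2 (by linarith))]
  by_cases h : 1/2 ≤ |x|
  · rw [if_pos h, if_pos (by linarith)]
  · rw [if_neg h, if_neg (show ¬ (1:ℝ) ≤ 2 * |x| by linarith),
      if_pos (by norm_num : (1:ℝ)/2 ≤ 3/4), if_neg (by norm_num : ¬ (1:ℝ) ≤ 3/4)]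
    field_simp
    ring

lemma continuous_uncurry_hy : Continuous (Function.uncurry hy) := by
  have hlower : Continuous fun p : ℝ × ℝ => if p.1 ≤ 3/4 then 6 * |p.2| - 6 * p.1 + 4
      else (3 * |p.2| + 5 * p.1 - 4) / (2 * p.1 - 1) := by
    refine continuous_if_le continuous_fst continuous_const (by fun_prop) ?_ ?_
    · exact ContinuousOn.div (by fun_prop) (by fun_prop) fun p (hp : 3/4 ≤ p.1) => by linarith
    · intro p hp
      rw [hp]
      ring
  have hmiddle : Continuous fun p : ℝ × ℝ => if p.1 ≤ |p.2| then 4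
      else if p.1 ≤ 3/4 then 6 * |p.2| - 6 * p.1 + 4
      else (3 * |p.2| + 5 * p.1 - 4) / (2 * p.1 - 1) := by
    refine continuous_const.if_le hlower continuous_fst (by fun_prop) fun p hp => ?_
    split_ifs
    · rw [← hp]; ring
    · rw [← hp, eq_div_iff (by linarith)]; ring
  have hupper : Function.uncurry hy = fun p : ℝ × ℝ => if 1/4 ≤ |p.2| + |p.1 - 3/4| then
      (if p.1 ≤ |p.2| then 4 else if p.1 ≤ 3/4 then 6 * |p.2| - 6 * p.1 + 4
      else (3 * |p.2| + 5 * p.1 - 4) / (2 * p.1 - 1)) else 1 := by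
    funext p
    simp only [Function.uncurry, hy, ← not_lt, ite_not]
  rw [hupper]
  refine hmiddle.if_le continuous_const continuous_const (by fun_prop) fun p hp => ?_
  have hx := abs_nonneg p.2
  have hy₁ := le_abs_self (p.1 - 3/4)
  have hy₂ := neg_abs_le (p.1 - 3/4)
  rw [if_neg (by linarith)]
  split_ifs
  · rw [abs_of_nonpos (show p.1 - 3/4 ≤ 0 by linarith)] at hp
    linarith
  · rw [abs_of_pos (show 0 < p.1 - 3/4 by linarith)] at hp
    rw [div_eq_iff (by linarith)]
    linarith

lemma continuous_hmap : Continuous hmap := by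
  have hmap_eq : hmap = fun z =>
      Complex.equivRealProdCLM.symm (Function.uncurry hy (z.im, z.re) * z.re, z.im) := rfl
  rw [hmap_eq]
  exact Complex.equivRealProdCLM.symm.continuous.comp
    (((continuous_uncurry_hy.comp (continuous_im.prodMk continuous_re)).mul continuous_re).prodMk
      continuous_im)

noncomputable def fStrip (m : ℤ) (z : ℂ) : ℂ := (2 : ℂ) ^ (-(m+1)) * hmap ((2 : ℂ) ^ m * z)

lemma continuous_fStrip (m : ℤ) : Continuous (fStrip m) :=
  continuous_const.mul (continuous_hmap.comp (continuous_const.mul continuous_id))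

lemma fStrip_eq (m : ℤ) (z : ℂ) :
    fStrip m z = ⟨hy ((2:ℝ) ^ m * z.im) ((2:ℝ) ^ m * z.re) * z.re / 2, z.im / 2⟩ := by
  have hpow (k : ℤ) : (2:ℂ) ^ k = ((2 ^ k : ℝ) : ℂ) := by push_cast; rfl
  have hhalf : (2:ℝ) ^ (-(m+1)) * 2 ^ m = 1/2 := by
    rw [← zpow_add₀ two_ne_zero, show -(m+1) + m = -1 by ring]; norm_num
  rw [fStrip, hpow, hpow, hmap]
  apply Complex.ext <;> simp only [re_ofReal_mul, im_ofReal_mul]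
  · linear_combination z.re * hy ((2:ℝ) ^ m * z.im) ((2:ℝ) ^ m * z.re) * hhalf
  · linear_combination z.im * hhalf

lemma fStrip_eq_fStrip_sub_one {m : ℤ} {z : ℂ} (h : z.im = 2 ^ (-m)) :
    fStrip m z = fStrip (m - 1) z := by
  have hm : (2:ℝ) ^ m = 2 * 2 ^ (m - 1) := by
    rw [← zpow_one_add₀ two_ne_zero]; ring_nf
  have h₁ : (2:ℝ) ^ m * z.im = 1 := by
    rw [h, ← zpow_add₀ two_ne_zero, add_neg_cancel, zpow_zero]
  have h₂ : (2:ℝ) ^ (m - 1) * z.im = 1/2 := by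
    rw [h, ← zpow_add₀ two_ne_zero, show m - 1 + -m = -1 by ring]; norm_num
  rw [fStrip_eq, fStrip_eq, h₁, h₂, hy_half, hm, mul_assoc]

lemma f_eq_fStrip {m : ℤ} {z : ℂ} (h : z.im ∈ Ioc ((2:ℝ) ^ (-(m+1))) ((2:ℝ) ^ (-m))) :
    f z = fStrip m z := by
  have hz : 0 < z.im := (zpow_pos two_pos _).trans h.1
  rw [f, if_neg hz.not_ge, (mval_eq_iff hz).2 h, fStrip]

lemma f_of_im_pos {z : ℂ} (hz : 0 < z.im) : f z = fStrip (mval z.im) z :=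
  f_eq_fStrip ((mval_eq_iff hz).1 rfl)

lemma im_f (z : ℂ) : (f z).im = z.im / 2 := by
  rcases le_or_gt z.im 0 with hz | hz
  · rw [f, if_pos hz]
  · rw [f_of_im_pos hz, fStrip_eq]

lemma f_eq_of_im_le_abs_re {z : ℂ} (h : z.im ≤ |z.re|) : f z = ⟨2 * z.re, z.im / 2⟩ := by
  rcases le_or_gt z.im 0 with hz | hz
  · rw [f, if_pos hz]
  have hm : (0:ℝ) < 2 ^ mval z.im := zpow_pos two_pos _
  rw [f_of_im_pos hz, fStrip_eq, hy_eq_four_of_le_abs (by rw [abs_mul, abs_of_pos hm]; gcongr)]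
  apply Complex.ext <;> simp only; ring

lemma abs_re_f_le (z : ℂ) : |(f z).re| ≤ 2 * |z.re| := by
  rcases le_or_gt z.im 0 with hz | hz
  · rw [f, if_pos hz, abs_mul, abs_two]
  · rw [f_of_im_pos hz, fStrip_eq, abs_div, abs_mul, abs_two]
    have := abs_hy_le_four ((2:ℝ) ^ mval z.im * z.im) ((2:ℝ) ^ mval z.im * z.re)
    have := abs_nonneg z.re
    nlinarith

lemma norm_f_le (z : ℂ) : ‖f z‖ ≤ 2 * ‖z‖ := by
  rw [← abs_of_nonneg (norm_nonneg (f z)), ← abs_of_nonneg (by positivity : 0 ≤ 2 * ‖z‖),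
    ← sq_le_sq, mul_pow, Complex.sq_norm, Complex.sq_norm, normSq_apply, normSq_apply, im_f]
  have hre : (f z).re ^ 2 ≤ (2 * z.re) ^ 2 :=
    sq_le_sq.2 (by rw [abs_mul, abs_two]; exact abs_re_f_le z)
  nlinarith [sq_nonneg z.im]

lemma continuousAt_f_zero : ContinuousAt f 0 := by
  refine continuousAt_of_locally_lipschitz one_pos 2 fun z _ => ?_
  have hf0 : f 0 = 0 := by
    rw [f_eq_of_im_le_abs_re (by simp)]
    apply Complex.ext <;> simp
  simpa [dist_eq_norm, hf0] using norm_f_le z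

lemma continuousAt_f_of_im_pos {z : ℂ} (hz : 0 < z.im) : ContinuousAt f z := by
  set m := mval z.im
  have hglued :
      Continuous fun w : ℂ => if w.im ≤ 2 ^ (-m) then fStrip m w else fStrip (m - 1) w :=
    (continuous_fStrip m).if_le (continuous_fStrip (m - 1)) continuous_im continuous_const
      fun w hw => fStrip_eq_fStrip_sub_one hw
  obtain ⟨h₁, h₂⟩ := (mval_eq_iff hz).1 rfl
  have hU : {w : ℂ | (2:ℝ) ^ (-(m+1)) < w.im ∧ w.im < 2 ^ (-(m-1))} ∈ nhds z := by
    refine (isOpen_lt continuous_const continuous_im).inter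
      (isOpen_lt continuous_im continuous_const) |>.mem_nhds ⟨h₁, h₂.trans_lt ?_⟩
    exact zpow_lt_zpow_right₀ one_lt_two (by omega)
  refine hglued.continuousAt.congr (Filter.eventuallyEq_of_mem hU fun w ⟨hw₁, hw₂⟩ => ?_)
  split_ifs with hw
  · exact (f_eq_fStrip ⟨hw₁, hw⟩).symm
  · exact (f_eq_fStrip (m := m - 1)
      ⟨by rw [sub_add_cancel]; exact lt_of_not_ge hw, hw₂.le⟩).symm

lemma continuous_f : Continuous f := by
  refine continuous_iff_continuousAt.2 fun z => ?_
  rcases lt_or_ge 0 z.im with hpos | hnonpos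
  · exact continuousAt_f_of_im_pos hpos
  rcases lt_or_ge z.im |z.re| with hlin | hzero
  · have hU : {w : ℂ | w.im < |w.re|} ∈ nhds z :=
      (isOpen_lt continuous_im continuous_re.abs).mem_nhds hlin
    have hL : Continuous fun w : ℂ => (⟨2 * w.re, w.im / 2⟩ : ℂ) :=
      Complex.equivRealProdCLM.symm.continuous.comp
        ((continuous_const.mul continuous_re).prodMk (continuous_im.div_const 2))
    exact hL.continuousAt.congr (Filter.eventuallyEq_of_mem hU fun w hw =>
      (f_eq_of_im_le_abs_re hw.le).symm)
  · have hz : z = 0 := Complex.ext (abs_nonpos_iff.1 (hzero.trans hnonpos))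
      (by rw [zero_im]; linarith [abs_nonneg z.re])
    exact hz ▸ continuousAt_f_zero

theorem stmt5 :
    -- f is well defined: it satisfies the defining piecewise description
    (∀ (m : ℤ) (z : ℂ), z.im ∈ Ioc ((2:ℝ) ^ (-(m+1))) ((2:ℝ) ^ (-m)) →
        f z = (2 : ℂ) ^ (-(m+1)) * hmap ((2 : ℂ) ^ m * z)) ∧
    (∀ z : ℂ, z.im ≤ 0 → f z = ⟨2 * z.re, z.im / 2⟩) ∧
    Continuous f ∧
    (∀ z : ℂ, (f z).im = z.im / 2) :=
  ⟨fun _ _ hz => f_eq_fStrip hz, fun _ hz => if_pos hz, continuous_f, im_f⟩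
end

section
/- Let p = g ∘ f with f, g as above. Then p(z) = f(z) whenever |f(z)| ≤ 1. In particular, since f(z) = z/2 on the diamonds W_k = 2^{-k}W₀ (which all lie in the closed unit disc), p maps W̄_k onto W̄_{k+1} for every k ≥ 0, and consequently pⁿ(z) → 0 uniformly on each W̄_k as n → ∞. -/
/-!
On the closed diamond `|x| + |y - 3/4| ≤ 1/4` the slice function `h_y` is `1`: on its boundary
the branch `4` never applies and the last two branches equal `1`. So `h` fixes `W̄₀` and, by the
scaling in its definition, `f` is `z ↦ z/2` on each `W̄_k`. These sets lie in the disc where `g`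
is the identity, hence `p` is `z ↦ z/2` on `⋃ W̄_k`, `pⁿ z = 2⁻ⁿ z` on `W̄_k`, and `W̄_k` is
bounded.
-/

open Set Complex Filter

/-- The open diamond `W₀` with vertices `i`, `i/2`, `(3i+1)/4`, `(3i-1)/4`. -/
def W0 : Set ℂ := {z : ℂ | |z.re| + |z.im - 3/4| < 1/4}

/-- The scaled diamonds `W_k = 2^{-k} W₀`. -/
def W (k : ℕ) : Set ℂ := (fun z : ℂ => (2 : ℂ) ^ (-(k : ℤ)) * z) '' W0

/-- The map `g`. -/
noncomputable def g (δ : ℝ) (d : ℕ) (z : ℂ) : ℂ :=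
  if ‖z‖ ≤ 1 then z
  else if ‖z‖ ≤ 2 then z + δ * (‖z‖ - 1) * z ^ d
  else z + δ * z ^ d

/-- The polynomial-type quasiregular map `p = g ∘ f`. -/
noncomputable def p (δ : ℝ) (d : ℕ) : ℂ → ℂ := g δ d ∘ f

open Topology

lemma hy_eq_one {x y : ℝ} (h : |x| + |y - 3/4| ≤ 1/4) : hy y x = 1 := by
  unfold hy
  split_ifs with hlt
  · rfl
  · exfalso
    linarith [neg_abs_le (y - 3/4)]
  · rw [abs_of_nonpos (by linarith : y - 3/4 ≤ 0)] at h hlt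
    linarith
  · rw [abs_of_pos (by linarith : 0 < y - 3/4)] at h hlt
    rw [div_eq_one_iff_eq (by linarith)]
    linarith

lemma hmap_of_re_eq_zero {z : ℂ} (h : z.re = 0) : hmap z = z :=
  Complex.ext (by simp [hmap, h]) rfl

lemma hmap_of_mem_closedDiamond {z : ℂ} (h : |z.re| + |z.im - 3/4| ≤ 1/4) : hmap z = z :=
  Complex.ext (by simp [hmap, hy_eq_one h]) rfl

lemma mval_two_zpow_neg_mul (m : ℤ) {t : ℝ} (ht : t ∈ Ioc (1/2) 1) :
    mval (2 ^ (-m) * t) = m := by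
  have ht0 : 0 < t := by linarith [ht.1]
  have hlog0 : Real.logb 2 t ≤ 0 := Real.logb_nonpos one_lt_two ht0.le ht.2
  have hlog1 : -1 < Real.logb 2 t := by
    rw [Real.lt_logb_iff_rpow_lt one_lt_two ht0]
    norm_num [ht.1]
  rw [mval, mul_inv, ← zpow_neg, neg_neg, Real.logb_mul (by positivity) (inv_pos.2 ht0).ne',
    Real.logb_inv, ← Real.rpow_intCast, Real.logb_rpow two_pos (by norm_num), Int.floor_eq_iff]
  constructor <;> linarith

lemma two_zpow_mul_re (n : ℤ) (z : ℂ) : ((2 : ℂ) ^ n * z).re = 2 ^ n * z.re := by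
  rw [← Complex.ofReal_ofNat, ← Complex.ofReal_zpow, Complex.re_ofReal_mul]

lemma two_zpow_mul_im (n : ℤ) (z : ℂ) : ((2 : ℂ) ^ n * z).im = 2 ^ n * z.im := by
  rw [← Complex.ofReal_ofNat, ← Complex.ofReal_zpow, Complex.im_ofReal_mul]

lemma f_of_hmap_eq {z : ℂ} (hz : 0 < z.im)
    (h : hmap ((2 : ℂ) ^ mval z.im * z) = (2 : ℂ) ^ mval z.im * z) : f z = 2⁻¹ * z := by
  rw [f, if_neg hz.not_ge, h, ← mul_assoc, ← zpow_add₀ two_ne_zero,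
    show -(mval z.im + 1) + mval z.im = -1 by ring, zpow_neg_one]

lemma W_eq_preimage (k : ℕ) : W k = (fun z : ℂ => (2 : ℂ) ^ (k : ℤ) * z) ⁻¹' W0 := by
  ext z
  constructor
  · rintro ⟨w, hw, rfl⟩
    simpa using hw
  · intro hz
    exact ⟨_, hz, by simp⟩

lemma W_succ (k : ℕ) : W (k + 1) = (fun z : ℂ => 2⁻¹ * z) '' W k := by
  rw [W, W, image_image]
  refine image_congr fun z _ => ?_
  rw [← mul_assoc, ← zpow_neg_one, ← zpow_add₀ (two_ne_zero' ℂ)]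
  push_cast
  ring_nf

lemma closure_W_subset (k : ℕ) :
    closure (W k) ⊆
      (fun z : ℂ => (2 : ℂ) ^ (k : ℤ) * z) ⁻¹' {w | |w.re| + |w.im - 3/4| ≤ 1/4} := by
  have hcont : Continuous fun w : ℂ => |w.re| + |w.im - 3/4| := by fun_prop
  rw [W_eq_preimage]
  exact ((continuous_const_mul _).closure_preimage_subset W0).trans
    (preimage_mono (closure_lt_subset_le hcont continuous_const))

lemma f_of_mem_closure_W {k : ℕ} {z : ℂ} (hz : z ∈ closure (W k)) : f z = 2⁻¹ * z := by
  set w := (2 : ℂ) ^ (k : ℤ) * z with hw_def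
  have hw : |w.re| + |w.im - 3/4| ≤ 1/4 := closure_W_subset k hz
  have hzw : z = (2 : ℂ) ^ (-(k : ℤ)) * w := by
    rw [hw_def, ← mul_assoc, ← zpow_add₀ (two_ne_zero' ℂ), neg_add_cancel, zpow_zero, one_mul]
  have him := abs_le.1 (show |w.im - 3/4| ≤ 1/4 by linarith [abs_nonneg w.re])
  have hz_im : z.im = 2 ^ (-(k : ℤ)) * w.im := by rw [hzw, two_zpow_mul_im]
  refine f_of_hmap_eq (by rw [hz_im]; exact mul_pos (by positivity) (by linarith)) ?_
  rcases eq_or_ne w.re 0 with hre | hre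
  · refine hmap_of_re_eq_zero ?_
    rw [two_zpow_mul_re, hzw, two_zpow_mul_re, hre, mul_zero, mul_zero]
  · -- off the imaginary axis the closed diamond lies strictly between heights `1/2` and `1`
    have him' := abs_lt.1 (show |w.im - 3/4| < 1/4 by linarith [abs_pos.2 hre])
    rw [hz_im, mval_two_zpow_neg_mul k ⟨by linarith, by linarith⟩]
    exact hmap_of_mem_closedDiamond hw

lemma norm_le_of_mem_closure_W {k : ℕ} {z : ℂ} (hz : z ∈ closure (W k)) : ‖z‖ ≤ 5/4 := by
  set w := (2 : ℂ) ^ (k : ℤ) * z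
  have hw : |w.re| + |w.im - 3/4| ≤ 1/4 := closure_W_subset k hz
  have him := abs_le.1 (show |w.im - 3/4| ≤ 1/4 by linarith [abs_nonneg w.re])
  have hw_norm : ‖w‖ ≤ 5/4 := by
    refine (Complex.norm_le_abs_re_add_abs_im w).trans ?_
    rw [abs_of_pos (show 0 < w.im by linarith)]
    linarith [abs_nonneg (w.im - 3/4)]
  have hscale : 1 ≤ ‖(2 : ℂ) ^ (k : ℤ)‖ := by
    rw [norm_zpow, Complex.norm_two]
    exact one_le_zpow₀ one_le_two (Int.natCast_nonneg k)
  calc ‖z‖ ≤ ‖(2 : ℂ) ^ (k : ℤ)‖ * ‖z‖ := le_mul_of_one_le_left (norm_nonneg z) hscale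
    _ = ‖w‖ := (norm_mul _ _).symm
    _ ≤ 5/4 := hw_norm

lemma p_of_norm_f_le_one (δ : ℝ) (d : ℕ) {z : ℂ} (h : ‖f z‖ ≤ 1) : p δ d z = f z := by
  simp only [p, Function.comp_apply, g, if_pos h]

lemma p_of_mem_closure_W (δ : ℝ) (d : ℕ) {k : ℕ} {z : ℂ} (hz : z ∈ closure (W k)) :
    p δ d z = 2⁻¹ * z := by
  have hf := f_of_mem_closure_W hz
  have hnorm : ‖f z‖ ≤ 1 := by
    rw [hf, norm_mul, norm_inv, Complex.norm_two]
    linarith [norm_le_of_mem_closure_W hz]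
  rw [p_of_norm_f_le_one δ d hnorm, hf]

lemma image_closure_W (k : ℕ) :
    (fun z : ℂ => 2⁻¹ * z) '' closure (W k) = closure (W (k + 1)) := by
  rw [W_succ, ← Homeomorph.coe_mulLeft₀ (2⁻¹ : ℂ) (by norm_num), Homeomorph.image_closure]

lemma Function.iterate_eqOn_of_eqOn_of_mapsTo {α : Type*} {F G : α → α} {S : ℕ → Set α}
    (heq : ∀ k, EqOn F G (S k)) (hmaps : ∀ k, MapsTo G (S k) (S (k + 1))) (n k : ℕ) :
    EqOn F^[n] G^[n] (S k) := by
  induction n generalizing k with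
  | zero => exact fun _ _ => rfl
  | succ n ih =>
    intro z hz
    rw [Function.iterate_succ_apply, Function.iterate_succ_apply, heq k hz]
    exact ih (k + 1) (hmaps k hz)

lemma tendstoUniformlyOn_pow_mul {𝕜 : Type*} [NormedField 𝕜] {c : 𝕜} (hc : ‖c‖ < 1)
    {S : Set 𝕜} (hS : Bornology.IsBounded S) :
    TendstoUniformlyOn (fun (n : ℕ) (z : 𝕜) => c ^ n * z) 0 atTop S := by
  obtain ⟨C, hC⟩ := hS.exists_norm_le
  have hlim : Tendsto (fun n : ℕ => ‖c‖ ^ n * C) atTop (𝓝 0) := by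
    simpa using (tendsto_pow_atTop_nhds_zero_of_lt_one (norm_nonneg c) hc).mul_const C
  rw [Metric.tendstoUniformlyOn_iff]
  intro ε hε
  filter_upwards [hlim.eventually (gt_mem_nhds hε)] with n hn z hz
  rw [Pi.zero_apply, dist_zero_left, norm_mul, norm_pow]
  exact (mul_le_mul_of_nonneg_left (hC z hz) (by positivity)).trans_lt hn

theorem stmt12_general (δ : ℝ) (d : ℕ) :
    (∀ z : ℂ, ‖f z‖ ≤ 1 → p δ d z = f z) ∧
    (∀ k : ℕ, p δ d '' closure (W k) = closure (W (k + 1))) ∧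
    (∀ k : ℕ, TendstoUniformlyOn (fun (n : ℕ) (z : ℂ) => (p δ d)^[n] z) 0
        Filter.atTop (closure (W k))) := by
  have hhalf (k : ℕ) : EqOn (p δ d) (fun z => 2⁻¹ * z) (closure (W k)) :=
    fun _ hz => p_of_mem_closure_W δ d hz
  have hmaps (k : ℕ) : MapsTo (fun z : ℂ => 2⁻¹ * z) (closure (W k)) (closure (W (k + 1))) :=
    image_closure_W k ▸ mapsTo_image _ _
  refine ⟨fun z => p_of_norm_f_le_one δ d, fun k => (image_congr (hhalf k)).trans
    (image_closure_W k), fun k => ?_⟩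
  have hbdd : Bornology.IsBounded (closure (W k)) :=
    isBounded_iff_forall_norm_le.2 ⟨5/4, fun _ => norm_le_of_mem_closure_W⟩
  refine (tendstoUniformlyOn_pow_mul (c := (2⁻¹ : ℂ)) (by norm_num) hbdd).congr ?_
  filter_upwards with n z hz
  dsimp only
  rw [Function.iterate_eqOn_of_eqOn_of_mapsTo hhalf hmaps n k hz]
  exact (smul_iterate_apply (2⁻¹ : ℂ) n z).symm

theorem stmt12 (δ : ℝ) (hδ : 0 < δ) (d : ℕ) (hd : 2 ≤ d) :
    (∀ z : ℂ, ‖f z‖ ≤ 1 → p δ d z = f z) ∧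
    (∀ k : ℕ, p δ d '' closure (W k) = closure (W (k + 1))) ∧
    (∀ k : ℕ, TendstoUniformlyOn (fun (n : ℕ) (z : ℂ) => (p δ d)^[n] z) 0
        Filter.atTop (closure (W k))) :=
  stmt12_general δ d
end
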